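/- Let M be a transversal matroid with presentation 𝒜 = (A_i : i ∈ [r]) on E, and let x ∉ E. For I ⊆ [r], let 𝒜^I be the system obtained by adjoining x to A_i for each i ∈ I. If Y ⊆ E satisfies |s_𝒜(Y)| = r_M(Y), then the transversal matroid M[𝒜^{s_𝒜(Y)}] equals the principal extension M +_Y x. -/

import Mathlib

/-!
Let `N` be the transversal matroid of the system `𝒜'` obtained by adjoining `x` to the sets
`A_i`, `i ∈ s_𝒜(Y)`. Matchings avoiding `x` are the same for `𝒜` and `𝒜'`, so `N` restricts to `M`
on `E`, and the formula for the rank of `insert x Z` amounts to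
`x ∈ cl_N(Z) ↔ Y ⊆ cl_M(Z)`. If some `y ∈ Y` lies outside `cl_M(Z)`, a matching of
`insert y J` (for a basis `J` of `Z`) matches `y` into `s_𝒜(Y)`, and giving that index to `x`
instead matches `insert x J` in `𝒜'`. Conversely, a basis `B` of `Y` has `|B| = |s_𝒜(Y)|`, while
in `𝒜'` the elements of `insert x B` can only be matched into `s_𝒜(Y)`; so `x ∈ cl_N(B)`.
-/

/-- `Y` is a partial transversal of the set system `A : Fin r → Set α`. -/
def IsPartialTransversal {α : Type*} {r : ℕ} (A : Fin r → Set α) (Y : Set α) : Prop :=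
  ∃ φ : α → Fin r, Set.InjOn φ Y ∧ ∀ y ∈ Y, y ∈ A (φ y)

/-- The `𝒜`-support of `X`: the indices `i` with `X ∩ A_i ≠ ∅`. -/
def supp {α : Type*} {r : ℕ} (A : Fin r → Set α) (X : Set α) : Set (Fin r) :=
  {i | (X ∩ A i).Nonempty}

/-- The rank of `X` in `M`: the largest size of an independent subset of `X`. -/
noncomputable def rk {α : Type*} (M : Matroid α) (X : Set α) : ℕ :=
  sSup {n | ∃ I, M.Indep I ∧ I ⊆ X ∧ I.ncard = n}

open Set Matroid

section Rank

variable {α : Type*} [Finite α] {M : Matroid α} {X R : Set α} {e : α}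

lemma rk_eq_toNat_eRk (M : Matroid α) (X : Set α) : rk M X = (M.eRk X).toNat := by
  obtain ⟨I, hI⟩ := M.exists_isBasis' X
  refine le_antisymm (csSup_le ⟨0, ∅, M.empty_indep, empty_subset X, ncard_empty α⟩ ?_) ?_
  · rintro n ⟨J, hJ, hJX, rfl⟩
    rw [ncard_def]
    exact ENat.toNat_le_toNat (hJ.encard_le_eRk_of_subset hJX) (M.isRkFinite_of_finite
      X.toFinite).eRk_lt_top.ne
  · refine le_csSup ⟨Nat.card α, ?_⟩ ⟨I, hI.indep, hI.subset, ?_⟩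
    · rintro n ⟨J, -, -, rfl⟩
      exact (ncard_le_ncard (subset_univ J)).trans_eq (ncard_univ α)
    · rw [ncard_def, hI.encard_eq_eRk]

lemma Matroid.IsBasis'.rk_eq_ncard {I : Set α} (hI : M.IsBasis' I X) : rk M X = I.ncard := by
  rw [rk_eq_toNat_eRk, ← hI.encard_eq_eRk, ncard_def]

lemma rk_restrict_of_subset (hXR : X ⊆ R) : rk (M ↾ R) X = rk M X := by
  rw [rk_eq_toNat_eRk, rk_eq_toNat_eRk, M.restrict_eRk_eq hXR]

lemma rk_insert_of_mem_closure (he : e ∈ M.closure X) : rk M (insert e X) = rk M X := by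
  rw [rk_eq_toNat_eRk, rk_eq_toNat_eRk, ← M.eRk_closure_eq (insert e X),
    M.closure_insert_eq_of_mem_closure he, M.eRk_closure_eq]

lemma rk_insert_of_notMem_closure (he : e ∈ M.E \ M.closure X) :
    rk M (insert e X) = rk M X + 1 := by
  rw [rk_eq_toNat_eRk, rk_eq_toNat_eRk, Matroid.eRk_insert_eq_add_one he,
    ENat.toNat_add (M.isRkFinite_of_finite X.toFinite).eRk_lt_top.ne ENat.one_ne_top]
  rfl

end Rank

section Transversal

variable {α : Type*} {r : ℕ} {A B : Fin r → Set α} {S : Set (Fin r)} {I Y : Set α} {x y : α}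

open Classical in
/-- The paper's `𝒜^S`. -/
def adjoinAt (A : Fin r → Set α) (S : Set (Fin r)) (x : α) : Fin r → Set α :=
  fun i => if i ∈ S then insert x (A i) else A i

lemma subset_adjoinAt (i : Fin r) : A i ⊆ adjoinAt A S x i := by
  unfold adjoinAt; split_ifs <;> simp

lemma mem_adjoinAt_iff_of_ne {i : Fin r} (hy : y ≠ x) : y ∈ adjoinAt A S x i ↔ y ∈ A i := by
  unfold adjoinAt; split_ifs <;> simp [hy]

lemma self_mem_adjoinAt_iff {i : Fin r} : x ∈ adjoinAt A S x i ↔ i ∈ S ∨ x ∈ A i := by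
  unfold adjoinAt; split_ifs with h <;> simp [h]

lemma IsPartialTransversal.mono (h : IsPartialTransversal A I) (hAB : ∀ i, A i ⊆ B i) :
    IsPartialTransversal B I := by
  obtain ⟨φ, hinj, hmem⟩ := h
  exact ⟨φ, hinj, fun y hy => hAB _ (hmem y hy)⟩

lemma isPartialTransversal_adjoinAt_iff (hxI : x ∉ I) :
    IsPartialTransversal (adjoinAt A S x) I ↔ IsPartialTransversal A I := by
  refine ⟨fun ⟨φ, hinj, hmem⟩ => ⟨φ, hinj, fun y hy => ?_⟩, fun h => h.mono subset_adjoinAt⟩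
  exact (mem_adjoinAt_iff_of_ne (ne_of_mem_of_not_mem hy hxI)).1 (hmem y hy)

lemma IsPartialTransversal.ncard_le_ncard_supp (h : IsPartialTransversal A I) :
    I.ncard ≤ (supp A I).ncard := by
  obtain ⟨φ, hinj, hmem⟩ := h
  rw [← hinj.ncard_image]
  exact ncard_le_ncard (image_subset_iff.2 fun y hy => ⟨y, hy, hmem y hy⟩)

lemma supp_mono {X Y : Set α} (hXY : X ⊆ Y) : supp A X ⊆ supp A Y :=
  fun _ ⟨y, hyX, hyA⟩ => ⟨y, hXY hyX, hyA⟩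

lemma not_isPartialTransversal_adjoinAt_insert (hxA : ∀ i, x ∉ A i) (hxI : x ∉ I)
    (hIY : I ⊆ Y) (hI : I.Finite) (hcard : (supp A Y).ncard ≤ I.ncard) :
    ¬ IsPartialTransversal (adjoinAt A (supp A Y) x) (insert x I) := by
  intro h
  have hsupp : supp (adjoinAt A (supp A Y) x) (insert x I) ⊆ supp A Y := by
    rintro i ⟨z, rfl | hzI, hz⟩
    · exact (self_mem_adjoinAt_iff.1 hz).resolve_right (hxA i)
    · exact supp_mono hIY
        ⟨z, hzI, (mem_adjoinAt_iff_of_ne (ne_of_mem_of_not_mem hzI hxI)).1 hz⟩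
  have := h.ncard_le_ncard_supp.trans (ncard_le_ncard hsupp)
  rw [ncard_insert_of_notMem hxI hI] at this
  omega

lemma IsPartialTransversal.insert_adjoinAt (h : IsPartialTransversal A (insert y I))
    (hyI : y ∉ I) (hxI : x ∉ I) (hyS : ∀ i, y ∈ A i → i ∈ S) :
    IsPartialTransversal (adjoinAt A S x) (insert x I) := by
  classical
  obtain ⟨φ, hinj, hmem⟩ := h
  rw [injOn_insert hyI] at hinj
  have hφ : EqOn (Function.update φ x (φ y)) φ I :=
    fun z hz => Function.update_of_ne (ne_of_mem_of_not_mem hz hxI) _ _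
  refine ⟨Function.update φ x (φ y), ?_, ?_⟩
  · rw [injOn_insert hxI, hφ.image_eq, Function.update_self]
    exact ⟨hinj.1.congr hφ.symm, hinj.2⟩
  · rintro z (rfl | hz)
    · rw [Function.update_self]
      exact self_mem_adjoinAt_iff.2 (Or.inl (hyS _ (hmem y (mem_insert y I))))
    · rw [hφ hz]
      exact subset_adjoinAt _ (hmem z (mem_insert_of_mem y hz))

end Transversal

section TransversalMatroid

variable {α : Type*} {r : ℕ} {A : Fin r → Set α} {S : Set (Fin r)} {M N : Matroid α}
  {E Y Z : Set α} {x : α}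

def IsTransversalPresentation (M : Matroid α) (E : Set α) (A : Fin r → Set α) : Prop :=
  ∀ I, M.Indep I ↔ I ⊆ E ∧ IsPartialTransversal A I

lemma IsTransversalPresentation.restrict_eq_of_adjoinAt (hM : IsTransversalPresentation M E A)
    (hME : M.E = E) (hN : IsTransversalPresentation N (insert x E) (adjoinAt A S x))
    (hx : x ∉ E) : N ↾ E = M := by
  refine ext_indep hME.symm fun I hIE => ?_
  rw [restrict_indep_iff, hN, hM, isPartialTransversal_adjoinAt_iff (notMem_subset hIE hx)]
  simp only [restrict_ground_eq] at hIE
  simp only [hIE, hIE.trans (subset_insert x E), true_and, and_true]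

lemma self_mem_closure_of_ncard_supp_eq_rk [Finite α]
    (hN : IsTransversalPresentation N (insert x E) (adjoinAt A (supp A Y) x))
    (hNM : N ↾ E = M) (hNE : N.E = insert x E) (hxA : ∀ i, x ∉ A i) (hx : x ∉ E) (hY : Y ⊆ E)
    (hYr : (supp A Y).ncard = rk M Y) : x ∈ N.closure Y := by
  obtain ⟨B, hB⟩ := M.exists_isBasis' Y
  have hBN : N.Indep B := by
    rw [← hNM] at hB
    exact hB.indep.of_restrict
  have hxB : x ∉ B := notMem_subset (hB.subset.trans hY) hx
  refine N.closure_subset_closure hB.subset ((hBN.mem_closure_iff_of_notMem hxB).2 ?_)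
  refine dep_iff.2 ⟨fun hxBN => ?_, insert_subset (hNE ▸ mem_insert x E) hBN.subset_ground⟩
  exact not_isPartialTransversal_adjoinAt_insert hxA hxB hB.subset B.toFinite
    (hYr.trans hB.rk_eq_ncard).le ((hN _).1 hxBN).2

lemma self_notMem_closure_of_not_subset_closure (hM : IsTransversalPresentation M E A)
    (hN : IsTransversalPresentation N (insert x E) (adjoinAt A (supp A Y) x))
    (hNM : N ↾ E = M) (hx : x ∉ E) (hY : Y ⊆ M.E) (hZ : Z ⊆ E) (hYZ : ¬ Y ⊆ M.closure Z) :
    x ∉ N.closure Z := by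
  obtain ⟨y, hyY, hyZ⟩ := not_subset.1 hYZ
  obtain ⟨J, hJ⟩ := M.exists_isBasis' Z
  have hJN : N.IsBasis' J Z := by
    rw [← hNM, isBasis'_restrict_iff, inter_eq_left.2 hZ] at hJ
    exact hJ.1
  have hyJ : y ∉ M.closure J := hJ.closure_eq_closure ▸ hyZ
  have hyJ' : y ∉ J := notMem_subset (M.subset_closure J hJ.indep.subset_ground) hyJ
  have hxJ : x ∉ J := notMem_subset (hJ.subset.trans hZ) hx
  have hJy : M.Indep (insert y J) :=
    (hJ.indep.insert_indep_iff_of_notMem hyJ').2 ⟨hY hyY, hyJ⟩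
  have hJx : N.Indep (insert x J) := (hN _).2 ⟨insert_subset_insert (hJ.subset.trans hZ),
    ((hM _).1 hJy).2.insert_adjoinAt hyJ' hxJ fun i hi => ⟨y, hyY, hi⟩⟩
  rw [← hJN.closure_eq_closure]
  exact ((hJN.indep.insert_indep_iff_of_notMem hxJ).1 hJx).2

end TransversalMatroid

open Classical in
/-- If `|s_𝒜(Y)| = r_M(Y)`, then the transversal matroid `M[𝒜^{s_𝒜(Y)}]`
(adjoin `x` to the sets `A_i` with `i ∈ s_𝒜(Y)`) is the principal extension
`M +_Y x`: its rank function satisfies the defining formulas of `M +_Y x`. -/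
theorem stmt_17 {α : Type*} {r : ℕ} [Finite α] (E : Set α) (A : Fin r → Set α)
    (hA : ∀ i, A i ⊆ E)
    (M : Matroid α) (hME : M.E = E)
    (hInd : ∀ I, M.Indep I ↔ I ⊆ E ∧ IsPartialTransversal A I)
    (x : α) (hx : x ∉ E)
    (Y : Set α) (hY : Y ⊆ E) (hYr : (supp A Y).ncard = rk M Y)
    (N : Matroid α) (hNE : N.E = insert x E)
    (hNInd : ∀ I, N.Indep I ↔ I ⊆ insert x E ∧
      IsPartialTransversal (fun i => if i ∈ supp A Y then insert x (A i) else A i) I) :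
    (∀ Z, Z ⊆ E → rk N Z = rk M Z) ∧
    (∀ Z, Z ⊆ E → rk N (insert x Z) =
      if Y ⊆ M.closure Z then rk M Z else rk M Z + 1) := by
  have hxA : ∀ i, x ∉ A i := fun i hi => hx (hA i hi)
  have hN : IsTransversalPresentation N (insert x E) (adjoinAt A (supp A Y) x) := hNInd
  have hNM : N ↾ E = M := IsTransversalPresentation.restrict_eq_of_adjoinAt hInd hME hN hx
  have hrk (Z : Set α) (hZ : Z ⊆ E) : rk N Z = rk M Z := by
    rw [← hNM, rk_restrict_of_subset hZ]
  refine ⟨hrk, fun Z hZ => ?_⟩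
  split_ifs with hYZ
  · have hMN : M.closure Z ⊆ N.closure Z := by
      rw [← hNM, restrict_closure_eq N hZ (hNE ▸ subset_insert x E)]
      exact inter_subset_left
    have hxY := self_mem_closure_of_ncard_supp_eq_rk hN hNM hNE hxA hx hY hYr
    rw [rk_insert_of_mem_closure (N.closure_subset_closure_of_subset_closure (hYZ.trans hMN) hxY),
      hrk Z hZ]
  · rw [rk_insert_of_notMem_closure ⟨hNE ▸ mem_insert x E,
      self_notMem_closure_of_not_subset_closure hInd hN hNM hx (hME ▸ hY) hZ hYZ⟩, hrk Z hZ]
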